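/- Stronger Central Sets Theorem (commutative case, via combinatorial characterization): let (S,+) be a countable commutative semigroup and let C be a central subset of S. Then there exist α : P_f(S^ℕ) → S and H : P_f(S^ℕ) → P_f(ℕ) such that: (1) if F ⊊ G in P_f(S^ℕ) then max H(F) < min H(G); (2) whenever r ∈ ℕ, G_1 ⊊ G_2 ⊊ ⋯ ⊊ G_r in P_f(S^ℕ) and f_i ∈ G_i for each i ∈ {1,…,r}, one has ∑_{i=1}^r (α(G_i) + ∑_{t ∈ H(G_i)} f_i(t)) ∈ C. -/

import Mathlib

/-- Fold of addition along a list, starting from `a` (no identity needed). -/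
def addChain {S : Type*} [Add S] : S → List S → S
  | a, [] => a
  | a, b :: l => addChain (a + b) l

/-- The sum `∑ t ∈ H, f t` in an additive commutative semigroup (junk value `f 0`
for `H = ∅`; we only use it for nonempty `H`). -/
def finSum {S : Type*} [AddCommSemigroup S] (f : ℕ → S) (H : Finset ℕ) : S :=
  match H.sort (· ≤ ·) with
  | [] => f 0
  | a :: l => addChain (f a) (l.map f)

def AddThick {S : Type*} [AddCommSemigroup S] (A : Set S) : Prop :=
  ∀ E : Finset S, E.Nonempty → ∃ x : S, ∀ e ∈ E, e + x ∈ A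

def AddPiecewiseSyndetic {S : Type*} [AddCommSemigroup S] (A : Set S) : Prop :=
  ∃ F : Finset S, F.Nonempty ∧ AddThick {s : S | ∃ t ∈ F, t + s ∈ A}

/-- Combinatorial characterization of central sets: a decreasing chain of piecewise
syndetic subsets with the shift property. -/
def AddCentral {S : Type*} [AddCommSemigroup S] (A : Set S) : Prop :=
  ∃ C : ℕ → Set S, (∀ n, C n ⊆ A) ∧ (∀ n, C (n + 1) ⊆ C n) ∧
    (∀ n, AddPiecewiseSyndetic (C n)) ∧
    (∀ n, ∀ x ∈ C n, ∃ m, C m ⊆ {s : S | x + s ∈ C n})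

/-!
Choose `α G` and `H G` by recursion along strict inclusion of finite sets `G` of sequences. Once
the choices on the proper subsets of `G` are fixed, there are only finitely many sums `y` along
chains strictly below `G`, so the shift property of the central chain `C₀ ⊇ C₁ ⊇ ⋯` gives one `M`
with `y + C_M ⊆ C₀` for every such `y ∈ C₀`. As `C_M` is piecewise syndetic, the Hales–Jewett
theorem yields `a` and `H`, lying beyond all earlier `H F`, with `a + ∑_{t ∈ H} f t ∈ C_M` for
every `f ∈ G`: colour a high-dimensional cube of words over `G` by the translate of `C_M` that
contains the sum the word spells out, and read `H` off the moving coordinates of a monochromatic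
line and `a` off its colour and fixed coordinates. Appending the terms of a chain
`G₁ ⊊ ⋯ ⊊ G_r` one at a time then keeps the sum inside `C₀ ⊆ C`.
-/

theorem Finset.exists_forall_of_strongRec {X β : Type*} [Nonempty β]
    (R : (Finset X → β) → Finset X → β → Prop)
    (hR : ∀ {P Q G b}, (∀ F ⊂ G, P F = Q F) → R P G b → R Q G b)
    (h : ∀ P G, ∃ b, R P G b) : ∃ Φ : Finset X → β, ∀ G, R Φ G (Φ G) := by
  classical
  let Φ : Finset X → β := fun G => G.strongInduction fun G ih =>
    (h (fun F => if hF : F ⊂ G then ih F hF else Classical.arbitrary β) G).choose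
  refine ⟨Φ, fun G => ?_⟩
  have hG : R (fun F => if hF : F ⊂ G then Φ F else Classical.arbitrary β) G (Φ G) := by
    rw [show Φ G = _ from strongInduction_eq _ G]
    exact (h _ G).choose_spec
  exact hR (fun F hF => dif_pos hF) hG

lemma Combinatorics.Line.exists_sum_apply_eq {α ι M : Type*} [Fintype ι] [AddCommMonoid M]
    (l : Line α ι) (v : α → ι → M) :
    ∃ m : M, ∀ x, ∑ i, v (l x i) i = ∑ i with l.idxFun i = none, v x i + m := by
  classical
  refine ⟨∑ i, (l.idxFun i).elim 0 (v · i), fun x => ?_⟩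
  rw [Finset.sum_filter, ← Finset.sum_add_distrib]
  refine Finset.sum_congr rfl fun i _ => ?_
  cases h : l.idxFun i <;> simp [h]

lemma addChain_concat {S : Type*} [Add S] (a b : S) (l : List S) :
    addChain a (l.concat b) = addChain a l + b := by
  induction l generalizing a with
  | nil => rfl
  | cons c l ih => exact ih (a + c)

namespace WithZero

open Finset

variable {S : Type*} [AddCommSemigroup S]

lemma exists_coe_eq_coe_add (s : S) (m : WithZero S) :
    ∃ s' : S, (s' : WithZero S) = s + m := by
  induction m with
  | zero => exact ⟨s, (add_zero _).symm⟩
  | coe t => exact ⟨s + t, rfl⟩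

lemma coe_addChain (a : S) (l : List S) :
    ((addChain a l : S) : WithZero S) = a + (l.map (↑)).sum := by
  induction l generalizing a with
  | nil => simp [addChain]
  | cons b l ih => simp [addChain, ih, add_assoc]

lemma coe_finSum (f : ℕ → S) {H : Finset ℕ} (hH : H.Nonempty) :
    ((finSum f H : S) : WithZero S) = ∑ t ∈ H, (f t : WithZero S) := by
  rw [← sum_map_toList, ← ((H.sort_perm_toList (· ≤ ·)).map _).sum_eq]
  unfold finSum
  cases h : H.sort (· ≤ ·) with
  | nil =>
    have := hH.card_pos
    rw [← H.length_sort (· ≤ ·), h] at this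
    exact (Nat.lt_irrefl 0 this).elim
  | cons a l => simp [coe_addChain, List.map_map, Function.comp_def]

end WithZero

open Combinatorics Finset in
theorem AddPiecewiseSyndetic.exists_add_finSum_mem {S : Type*} [AddCommSemigroup S] {A : Set S}
    (hA : AddPiecewiseSyndetic A) (F : Finset (ℕ → S)) (n : ℕ) :
    ∃ (a : S) (H : Finset ℕ), H.Nonempty ∧ (∀ t ∈ H, n < t) ∧ ∀ f ∈ F, a + finSum f H ∈ A := by
  classical
  obtain ⟨F₀, ⟨s₀, -⟩, hthick⟩ := hA
  -- Hales–Jewett needs a nonempty alphabet, and `S` has no zero: enlarge `F` by a constant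
  -- sequence, and push the cube sums, formed in `WithZero S`, back into `S` by adding `s₀`.
  set F' := insert (fun _ => s₀) F
  have : Nonempty F' := ⟨⟨_, mem_insert_self _ _⟩⟩
  obtain ⟨ι, _, hHJ⟩ := Line.exists_mono_in_high_dimension F' F₀
  let τ : ι ↪ ℕ :=
    (Fintype.equivFin ι).toEmbedding.trans (Fin.valEmbedding.trans (addLeftEmbedding (n + 1)))
  have hτ : ∀ i, n < τ i := fun i => by simp [τ]; omega
  let v : F' → ι → WithZero S := fun f i => (f : ℕ → S) (τ i)
  choose g hg using fun w : ι → F' => WithZero.exists_coe_eq_coe_add s₀ (∑ i, v (w i) i)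
  obtain ⟨x, hx⟩ := hthick (univ.image g) (univ_nonempty.image g)
  choose color hcolor hcolorA using fun w => hx (g w) (mem_image_of_mem g (mem_univ w))
  obtain ⟨l, c, hc⟩ := hHJ fun w => ⟨color w, hcolor w⟩
  obtain ⟨m, hm⟩ := l.exists_sum_apply_eq v
  obtain ⟨b, hb⟩ := WithZero.exists_coe_eq_coe_add s₀ m
  set I : Finset ι := {i | l.idxFun i = none}
  have hI : I.Nonempty := l.proper.imp fun i hi => by simp [I, hi]
  refine ⟨c + b + x, I.map τ, hI.map, by simpa using fun i _ => hτ i, fun f hf => ?_⟩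
  have hmono : color (l ⟨f, mem_insert_of_mem hf⟩) = c := congrArg Subtype.val (hc _)
  convert hcolorA (l ⟨f, mem_insert_of_mem hf⟩) using 1
  apply WithZero.coe_injective
  simp only [WithZero.coe_add, WithZero.coe_finSum f hI.map, hmono, hg, hm, hb, sum_map, v]
  abel

namespace CentralSets

open Finset

variable {S : Type*} [AddCommSemigroup S] (P : Finset (ℕ → S) → S × Finset ℕ)

def chainTerm (G : Finset (ℕ → S)) (f : ℕ → S) : S := (P G).1 + finSum f (P G).2

def chainSum {r : ℕ} (G : Fin (r + 1) → Finset (ℕ → S)) (f : Fin (r + 1) → ℕ → S) : S :=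
  addChain (chainTerm P (G 0) (f 0))
    (List.ofFn fun i : Fin r => chainTerm P (G i.succ) (f i.succ))

def chainSums (G : Finset (ℕ → S)) : Set S :=
  {y | ∃ (r : ℕ) (Gs : Fin (r + 1) → Finset (ℕ → S)) (fs : Fin (r + 1) → ℕ → S),
    StrictMono Gs ∧ (∀ i, fs i ∈ Gs i) ∧ (∀ i, Gs i ⊂ G) ∧ chainSum P Gs fs = y}

lemma chainSum_succ {r : ℕ} (G : Fin (r + 2) → Finset (ℕ → S)) (f : Fin (r + 2) → ℕ → S) :
    chainSum P G f = chainSum P (G ∘ Fin.castSucc) (f ∘ Fin.castSucc)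
      + chainTerm P (G (Fin.last _)) (f (Fin.last _)) := by
  rw [chainSum, List.ofFn_succ', List.concat_eq_append, ← List.concat_eq_append, addChain_concat]
  rfl

lemma chainSums_finite (G : Finset (ℕ → S)) : (chainSums P G).Finite := by
  have hsub : chainSums P G ⊆ ⋃ r ∈ Finset.range (2 ^ G.card), Set.range
      fun p : (Fin (r + 1) → G.powerset) × (Fin (r + 1) → G) =>
        chainSum P (fun i => p.1 i) (fun i => p.2 i) := by
    rintro y ⟨r, Gs, fs, hGs, hfs, hG, rfl⟩
    have hr : r + 1 ≤ 2 ^ G.card := by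
      simpa [card_powerset] using card_le_card_of_injOn (s := univ) Gs
        (fun i _ => mem_powerset.2 (hG i).subset) hGs.injective.injOn
    refine Set.mem_biUnion (mem_range.2 hr) ⟨(fun i => ⟨Gs i, mem_powerset.2 (hG i).subset⟩,
      fun i => ⟨fs i, (hG i).subset (hfs i)⟩), rfl⟩
  exact (Set.Finite.biUnion (finite_toSet _) fun r _ => Set.finite_range _).subset hsub

lemma chainSums_congr {P Q : Finset (ℕ → S) → S × Finset ℕ} {G : Finset (ℕ → S)}
    (h : ∀ F ⊂ G, P F = Q F) : chainSums P G = chainSums Q G := by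
  ext y
  refine exists_congr fun r => exists_congr fun Gs => exists_congr fun fs => and_congr_right
    fun _ => and_congr_right fun _ => and_congr_right fun hG => ?_
  simp only [chainSum, chainTerm, h _ (hG _)]

lemma exists_forall_add_mem_of_finite {C : ℕ → Set S} (hC : Antitone C)
    (hshift : ∀ x ∈ C 0, ∃ m, C m ⊆ {s | x + s ∈ C 0}) {Y : Set S} (hY : Y.Finite) :
    ∃ M, ∀ s ∈ C M, s ∈ C 0 ∧ ∀ y ∈ Y ∩ C 0, y + s ∈ C 0 := by
  have hev : ∀ y ∈ Y ∩ C 0, ∀ᶠ M in Filter.atTop, C M ⊆ {s | y + s ∈ C 0} := fun y hy =>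
    let ⟨m, hm⟩ := hshift y hy.2
    Filter.eventually_atTop.2 ⟨m, fun M hM => (hC hM).trans hm⟩
  obtain ⟨M, hM⟩ := ((Filter.eventually_all_finite (hY.inter_of_left _)).2 hev).exists
  exact ⟨M, fun s hs => ⟨hC (Nat.zero_le M) hs, fun y hy => hM y hy hs⟩⟩

def IsAdmissible (A : Set S) (G : Finset (ℕ → S)) (p : S × Finset ℕ) : Prop :=
  p.2.Nonempty ∧ (∀ F ⊂ G, ∀ s ∈ (P F).2, ∀ t ∈ p.2, s < t) ∧
    ∀ f ∈ G, p.1 + finSum f p.2 ∈ A ∧ ∀ y ∈ chainSums P G ∩ A, y + (p.1 + finSum f p.2) ∈ A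

lemma IsAdmissible.congr {P Q : Finset (ℕ → S) → S × Finset ℕ} {A : Set S}
    {G : Finset (ℕ → S)} {p : S × Finset ℕ} (h : ∀ F ⊂ G, P F = Q F) (hP : IsAdmissible P A G p) :
    IsAdmissible Q A G p := by
  obtain ⟨hne, hlt, hmem⟩ := hP
  refine ⟨hne, fun F hF => h F hF ▸ hlt F hF, ?_⟩
  rwa [← chainSums_congr h]

lemma exists_isAdmissible {C : ℕ → Set S} (hC : Antitone C)
    (hps : ∀ n, AddPiecewiseSyndetic (C n)) (hshift : ∀ x ∈ C 0, ∃ m, C m ⊆ {s | x + s ∈ C 0})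
    (G : Finset (ℕ → S)) : ∃ p, IsAdmissible P (C 0) G p := by
  classical
  obtain ⟨M, hM⟩ := exists_forall_add_mem_of_finite hC hshift (chainSums_finite P G)
  obtain ⟨a, H, hH, hbound, hmem⟩ :=
    (hps M).exists_add_finSum_mem G (G.ssubsets.sup fun F => (P F).2.sup id)
  refine ⟨(a, H), hH, fun F hF s hs t ht => ?_, fun f hf => hM _ (hmem f hf)⟩
  calc s ≤ (P F).2.sup id := le_sup (f := id) hs
    _ ≤ G.ssubsets.sup fun F => (P F).2.sup id :=
      le_sup (f := fun F => (P F).2.sup id) (mem_ssubsets.2 hF)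
    _ < t := hbound t ht

lemma chainSum_mem {A : Set S} (hP : ∀ G, IsAdmissible P A G (P G)) {r : ℕ}
    {G : Fin (r + 1) → Finset (ℕ → S)} {f : Fin (r + 1) → ℕ → S} (hG : StrictMono G)
    (hf : ∀ i, f i ∈ G i) : chainSum P G f ∈ A := by
  induction r with
  | zero => exact ((hP (G 0)).2.2 (f 0) (hf 0)).1
  | succ r ih =>
    have hG' : StrictMono (G ∘ Fin.castSucc) := hG.comp Fin.strictMono_castSucc
    have hinit : chainSum P (G ∘ Fin.castSucc) (f ∘ Fin.castSucc) ∈ chainSums P (G (Fin.last _)) :=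
      ⟨r, _, _, hG', fun i => hf _, fun i => hG (Fin.castSucc_lt_last i), rfl⟩
    rw [chainSum_succ]
    exact ((hP _).2.2 _ (hf _)).2 _ ⟨hinit, ih hG' fun i => hf _⟩

end CentralSets

theorem strongerCentralSetsTheorem_general {S : Type*} [AddCommSemigroup S]
    (C : Set S) (hC : AddCentral C) :
    ∃ (α : Finset (ℕ → S) → S) (H : Finset (ℕ → S) → Finset ℕ),
      (∀ F : Finset (ℕ → S), F.Nonempty → (H F).Nonempty) ∧
      (∀ F G : Finset (ℕ → S), F.Nonempty → F ⊂ G → ∀ s ∈ H F, ∀ t ∈ H G, s < t) ∧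
      (∀ r : ℕ, ∀ G : Fin (r + 1) → Finset (ℕ → S), ∀ f : Fin (r + 1) → ℕ → S,
        (G 0).Nonempty → (∀ i j : Fin (r + 1), i < j → G i ⊂ G j) →
        (∀ i, f i ∈ G i) →
        addChain (α (G 0) + finSum (f 0) (H (G 0)))
          (List.ofFn fun i : Fin r =>
            α (G i.succ) + finSum (f i.succ) (H (G i.succ))) ∈ C) := by
  obtain ⟨D, hDC, hDsucc, hps, hshift⟩ := hC
  have hD : Antitone D := antitone_nat_of_succ_le hDsucc
  have : Nonempty S := let ⟨_, ⟨s, _⟩, _⟩ := hps 0; ⟨s⟩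
  obtain ⟨Φ, hΦ⟩ := Finset.exists_forall_of_strongRec (CentralSets.IsAdmissible · (D 0))
    CentralSets.IsAdmissible.congr fun P => CentralSets.exists_isAdmissible P hD hps (hshift 0)
  exact ⟨fun G => (Φ G).1, fun G => (Φ G).2, fun F _ => (hΦ F).1,
    fun F G _ hFG => (hΦ G).2.1 F hFG,
    fun r G f _ hG hf => hDC 0 (CentralSets.chainSum_mem Φ hΦ hG hf)⟩

theorem strongerCentralSetsTheorem {S : Type*} [AddCommSemigroup S] [Countable S]
    (C : Set S) (hC : AddCentral C) :
    ∃ (α : Finset (ℕ → S) → S) (H : Finset (ℕ → S) → Finset ℕ),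
      (∀ F : Finset (ℕ → S), F.Nonempty → (H F).Nonempty) ∧
      (∀ F G : Finset (ℕ → S), F.Nonempty → F ⊂ G → ∀ s ∈ H F, ∀ t ∈ H G, s < t) ∧
      (∀ r : ℕ, ∀ G : Fin (r + 1) → Finset (ℕ → S), ∀ f : Fin (r + 1) → ℕ → S,
        (G 0).Nonempty → (∀ i j : Fin (r + 1), i < j → G i ⊂ G j) →
        (∀ i, f i ∈ G i) →
        addChain (α (G 0) + finSum (f 0) (H (G 0)))
          (List.ofFn fun i : Fin r =>
            α (G i.succ) + finSum (f i.succ) (H (G i.succ))) ∈ C) :=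
  strongerCentralSetsTheorem_general C hC
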